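/- Let ψ be a morphism from (k((G₁)),l₁) to (k((G₂)),l₂), and let G₁^#, G₂^# be the exponential extension groups with embeddings ι₁, ι₂ and sections l₁^#, l₂^#. Define ψ^# : G₁^# → G₂^# by ψ^#(e(α)) := e(ψ(α)) for α ∈ k((G₁^{>1})). Then ψ^# is an order-preserving group embedding which extends ψ (ψ^# ∘ ι₁ = ι₂ ∘ ψ on G₁), and ψ^# is a morphism from (k((G₁^#)),l₁^#) to (k((G₂^#)),l₂^#): the canonical extension of ψ^# to k((G₁^#)) satisfies (canonical extension of ψ^#) ∘ l₁^# = l₂^# ∘ ψ^# on G₁^#. -/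

import Mathlib

/-! Common framework: fields of generalized power series `k((G))` over a multiplicative
linearly ordered abelian group `G`, realized as Mathlib Hahn series over the additive
order-dual of `G` (so that anti well-ordered supports in `G` become partially
well-ordered supports), with the anti-lexicographic order. -/

noncomputable section
open HahnSeries
open scoped Classical

/-- The additive order-dual copy of the multiplicative group `G`:
anti well-ordered subsets of `G` correspond to well-ordered subsets of `gdual G`. -/
abbrev gdual (G : Type*) [CommGroup G] [LinearOrder G] [IsOrderedMonoid G] : Type _ := Additive Gᵒᵈ

/-- View an element of `G` as an exponent (element of `gdual G`). -/
def toGd {G : Type*} [CommGroup G] [LinearOrder G] [IsOrderedMonoid G] (g : G) : gdual G :=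
  Additive.ofMul (OrderDual.toDual g)

/-- View an exponent (element of `gdual G`) as an element of `G`. -/
def toG {G : Type*} [CommGroup G] [LinearOrder G] [IsOrderedMonoid G] (γ : gdual G) : G :=
  OrderDual.ofDual (Additive.toMul γ)

section HahnOrder

variable {k : Type*} [Field k] [LinearOrder k] [IsStrictOrderedRing k] {Γ' : Type*} [LinearOrder Γ']

theorem hahn_leadingCoeff_neg (x : HahnSeries Γ' k) : (-x).leadingCoeff = -x.leadingCoeff := by
  exact HahnSeries.leadingCoeff_neg

theorem hahn_leadingCoeff_add_pos {a b : HahnSeries Γ' k}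
    (ha : 0 < a.leadingCoeff) (hb : 0 < b.leadingCoeff) : 0 < (a + b).leadingCoeff := by
  have ha' : (0 : Lex (HahnSeries Γ' k)) < toLex a := HahnSeries.leadingCoeff_pos_iff.1 ha
  have hb' : (0 : Lex (HahnSeries Γ' k)) < toLex b := HahnSeries.leadingCoeff_pos_iff.1 hb
  exact HahnSeries.leadingCoeff_pos_iff.2 (add_pos ha' hb')

/-- The anti-lexicographic linear order on generalized power series:
`x` is positive iff its leading coefficient (the coefficient at the valuation `v x`,
i.e. at the largest element of the support) is positive. -/
instance instHahnLinearOrder : LinearOrder (HahnSeries Γ' k) where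
  le x y := x = y ∨ 0 < (y - x).leadingCoeff
  lt x y := 0 < (y - x).leadingCoeff
  le_refl x := Or.inl rfl
  le_trans x y z hxy hyz := by
    rcases hxy with rfl | hxy
    · exact hyz
    rcases hyz with rfl | hyz
    · exact Or.inr hxy
    · refine Or.inr ?_
      have := hahn_leadingCoeff_add_pos hyz hxy
      rwa [sub_add_sub_cancel] at this
  le_antisymm x y hxy hyx := by
    rcases hxy with rfl | hxy
    · rfl
    rcases hyx with rfl | hyx
    · rfl
    · exfalso
      have h1 : (x - y).leadingCoeff = -(y - x).leadingCoeff := by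
        rw [← hahn_leadingCoeff_neg, neg_sub]
      rw [h1] at hyx
      exact absurd hxy (not_lt.2 (le_of_lt (neg_pos.1 hyx)))
  lt_iff_le_not_ge x y := by
    constructor
    · intro h
      refine ⟨Or.inr h, ?_⟩
      rintro (rfl | h')
      · change 0 < (y - y).leadingCoeff at h
        rw [sub_self] at h
        simp at h
      · have h1 : (x - y).leadingCoeff = -(y - x).leadingCoeff := by
          rw [← hahn_leadingCoeff_neg, neg_sub]
        rw [h1] at h'
        exact absurd h (not_lt.2 (le_of_lt (neg_pos.1 h')))
    · rintro ⟨hle, hnot⟩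
      rcases hle with rfl | h
      · exact absurd (Or.inl rfl) hnot
      · exact h
  le_total x y := by
    by_cases h : x = y
    · exact Or.inl (Or.inl h)
    · have h0 : y - x ≠ 0 := sub_ne_zero.2 (Ne.symm h)
      have hlc : (y - x).leadingCoeff ≠ 0 := HahnSeries.leadingCoeff_ne_zero.2 h0
      rcases lt_or_gt_of_ne hlc with hneg | hpos
      · refine Or.inr (Or.inr ?_)
        rw [show x - y = -(y - x) from (neg_sub y x).symm, hahn_leadingCoeff_neg]
        exact neg_pos.2 hneg
      · exact Or.inl (Or.inr hpos)
  toDecidableLE := fun _ _ => Classical.dec _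

/-- With the anti-lexicographic order, `k((G))` is a linearly ordered abelian group. -/
instance instHahnLOACG : IsOrderedAddMonoid (HahnSeries Γ' k) where
  add_le_add_left := by
    intro x y hxy c
    rcases hxy with rfl | h
    · exact le_refl _
    · exact Or.inr (by rwa [add_sub_add_right_eq_sub])

theorem hahn_lt_iff (x y : HahnSeries Γ' k) : x < y ↔ 0 < (y - x).leadingCoeff := Iff.rfl

theorem hahn_single_pos (a : Γ') : (0 : HahnSeries Γ' k) < HahnSeries.single a 1 := by
  rw [hahn_lt_iff, sub_zero, HahnSeries.leadingCoeff_of_single]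
  exact one_pos

theorem hahn_single_lt_single {a b : Γ'} (hab : b < a) :
    (HahnSeries.single a 1 : HahnSeries Γ' k) < HahnSeries.single b 1 := by
  rw [hahn_lt_iff]
  set δ : HahnSeries Γ' k := HahnSeries.single b 1 - HahnSeries.single a 1 with hδdef
  have hne : b ≠ a := ne_of_lt hab
  have hb : δ.coeff b = 1 := by
    rw [hδdef, HahnSeries.coeff_sub, HahnSeries.coeff_single_same,
      HahnSeries.coeff_single_of_ne hne, sub_zero]
  have hbmem : b ∈ δ.support := by rw [HahnSeries.mem_support, hb]; exact one_ne_zero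
  have hδ : δ ≠ 0 := HahnSeries.support_nonempty_iff.1 ⟨b, hbmem⟩
  have hsub : δ.support ⊆ {b, a} := by
    intro γ hγ
    rw [HahnSeries.mem_support] at hγ
    by_contra hγ'
    simp only [Set.mem_insert_iff, Set.mem_singleton_iff, not_or] at hγ'
    apply hγ
    rw [hδdef, HahnSeries.coeff_sub, HahnSeries.coeff_single_of_ne hγ'.1,
      HahnSeries.coeff_single_of_ne hγ'.2, sub_zero]
  have hmin : δ.isWF_support.min (HahnSeries.support_nonempty_iff.2 hδ) = b := by
    have hmem := δ.isWF_support.min_mem (HahnSeries.support_nonempty_iff.2 hδ)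
    have hle := δ.isWF_support.min_le (HahnSeries.support_nonempty_iff.2 hδ) hbmem
    rcases hsub hmem with h | h
    · exact h
    · exact absurd (h ▸ hle) (not_le.2 hab)
  have hot : δ.orderTop = (b : WithTop Γ') := by rw [HahnSeries.orderTop, dif_neg hδ, hmin]
  rw [HahnSeries.leadingCoeff_of_ne_zero hδ, (WithTop.untop_eq_iff _).2 hot, hb]
  exact one_pos

end HahnOrder

section Series

variable {k : Type*} [Field k] [LinearOrder k] [IsStrictOrderedRing k] {G : Type*} [CommGroup G] [LinearOrder G] [IsOrderedMonoid G]

/-- The summable family `n ↦ (-1)^n/(n+1) • ε^(n+1)` (`ε` of positive order). -/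
def logFamily (ε : HahnSeries (gdual G) k) (hε : 0 < ε.orderTop) :
    HahnSeries.SummableFamily (gdual G) k ℕ where
  toFun n := ((-1 : k) ^ n / ((n : k) + 1)) • ε ^ (n + 1)
  isPWO_iUnion_support' := by
    refine ((HahnSeries.SummableFamily.powers ε).isPWO_iUnion_support).mono ?_
    intro γ hγ
    rw [Set.mem_iUnion] at hγ ⊢
    obtain ⟨n, hn⟩ := hγ
    refine ⟨n + 1, ?_⟩
    rw [HahnSeries.mem_support] at hn ⊢
    intro h
    apply hn
    show (((-1 : k) ^ n / ((n : k) + 1)) • ε ^ (n + 1)).coeff γ = 0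
    rw [HahnSeries.coeff_smul]
    show ((-1 : k) ^ n / ((n : k) + 1)) • (ε ^ (n + 1)).coeff γ = 0
    rw [show (ε ^ (n + 1)).coeff γ = 0 by simpa [hε] using h, smul_zero]
  finite_co_support' g := by
    have h := (HahnSeries.SummableFamily.powers ε).finite_co_support g
    refine Set.Finite.subset (h.preimage (Set.injOn_of_injective Nat.succ_injective)) ?_
    intro n hn
    simp only [Set.mem_preimage, Set.mem_setOf_eq] at hn ⊢
    intro h0
    apply hn
    show (((-1 : k) ^ n / ((n : k) + 1)) • ε ^ (n + 1)).coeff g = 0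
    rw [HahnSeries.coeff_smul]
    have : ((HahnSeries.SummableFamily.powers ε) (Nat.succ n)).coeff g = 0 := h0
    rw [show (ε ^ (n + 1)).coeff g = 0 by simpa [hε] using this, smul_zero]

/-- The logarithm on 1-units: `1 + ε ↦ Σ_{i ≥ 1} (-1)^(i-1) ε^i / i`
(for `ε` supported on `G^{<1}`; junk value `0` otherwise). -/
def logOneUnit (ε : HahnSeries (gdual G) k) : HahnSeries (gdual G) k :=
  if hε : 0 < ε.orderTop then (logFamily ε hε).hsum else 0

/-- The canonical extension of an order-preserving embedding `ψ : G₁ → G₂` to the fields of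
generalized power series, applying `ψ` to every monomial (junk value `0` if `ψ` is not
order-preserving). -/
def extMap {k : Type*} [Field k] [LinearOrder k] [IsStrictOrderedRing k] {G₁ G₂ : Type*} [CommGroup G₁] [LinearOrder G₁] [IsOrderedMonoid G₁]
    [CommGroup G₂] [LinearOrder G₂] [IsOrderedMonoid G₂] (ψ : G₁ → G₂) :
    HahnSeries (gdual G₁) k → HahnSeries (gdual G₂) k :=
  if h : StrictMono ψ then
    HahnSeries.embDomain
      (OrderEmbedding.ofStrictMono (fun γ => toGd (ψ (toG γ)))
        (fun a b hab => show toGd (ψ (toG a)) < toGd (ψ (toG b)) from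
          h (show toG b < toG a from hab)))
  else fun _ => 0

/-- The additive subgroup `k((G^{>1}))` of the series supported on `G^{>1}`. -/
def largeSeries (k : Type*) [Field k] [LinearOrder k] [IsStrictOrderedRing k] (G : Type*) [CommGroup G] [LinearOrder G] [IsOrderedMonoid G] :
    AddSubgroup (HahnSeries (gdual G) k) where
  carrier := {f | ∀ γ ∈ f.support, γ < (0 : gdual G)}
  zero_mem' := by intro γ hγ; rw [HahnSeries.support_zero] at hγ; exact absurd hγ (Set.notMem_empty γ)
  add_mem' := by
    intro a b ha hb γ hγ
    rcases HahnSeries.support_add_subset a b hγ with h | h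
    exacts [ha γ h, hb γ h]
  neg_mem' := by
    intro a ha γ hγ
    rw [HahnSeries.support_neg] at hγ
    exact ha γ hγ

theorem mem_largeSeries {f : HahnSeries (gdual G) k} :
    f ∈ largeSeries k G ↔ ∀ γ ∈ f.support, γ < (0 : gdual G) := Iff.rfl

/-- `log : (k^{>0}, ·) → (k, +)` is an order-preserving group embedding. -/
structure IsResidueLog (lg : k → k) : Prop where
  map_mul : ∀ a b : k, 0 < a → 0 < b → lg (a * b) = lg a + lg b
  strictMonoOn : StrictMonoOn lg (Set.Ioi 0)

/-- A prelogarithmic section of `k((G))`: an order-preserving group embedding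
`l : (G, ·) → (k((G^{>1})), +)`. -/
structure IsPrelogSection (l : G → HahnSeries (gdual G) k) : Prop where
  supp_large : ∀ g : G, l g ∈ largeSeries k G
  map_mul : ∀ g h : G, l (g * h) = l g + l h
  strictMono : StrictMono l

/-- The prelogarithm associated to a prelogarithmic section `l` and a logarithm `lg` on the
residue field: `L(g·a·(1+ε)) = l(g) + log(a) + Σ (-1)^(i-1) ε^i/i`. -/
def prelogL (lg : k → k) (l : G → HahnSeries (gdual G) k)
    (α : HahnSeries (gdual G) k) : HahnSeries (gdual G) k :=
  l (toG α.order) + HahnSeries.C (lg α.leadingCoeff) +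
    logOneUnit ((HahnSeries.single α.order α.leadingCoeff)⁻¹ * α - 1)

/-- The group of exponentials `G^# = e[k((G^{>1}))]`, a multiplicative copy of the ordered
additive group `k((G^{>1}))`. The element `e(α)` is `Multiplicative.ofAdd ⟨α, _⟩`. -/
abbrev Gsharp (k : Type*) [Field k] [LinearOrder k] [IsStrictOrderedRing k] (G : Type*) [CommGroup G] [LinearOrder G] [IsOrderedMonoid G] :
    Type _ := Multiplicative ↥(largeSeries k G)

/-- The embedding `ι : G → G^#`, `ι(g) := e(l(g))`. -/
def iotaSharp (l : G → HahnSeries (gdual G) k) (hl : ∀ g, l g ∈ largeSeries k G) (g : G) :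
    Gsharp k G :=
  Multiplicative.ofAdd (⟨l g, hl g⟩ : ↥(largeSeries k G))

/-- The prelogarithmic section `l^#` of `k((G^#))`: `l^#(e(α)) := ι(α)`, where
`ι : k((G)) → k((G^#))` is the canonical extension of `ι : G → G^#`. -/
def lsharpFun (l : G → HahnSeries (gdual G) k) (hl : ∀ g, l g ∈ largeSeries k G)
    (x : Gsharp k G) : HahnSeries (gdual (Gsharp k G)) k :=
  extMap (iotaSharp l hl) ((Multiplicative.toAdd x : ↥(largeSeries k G)) : HahnSeries (gdual G) k)

/-- The induced map `ψ^# : G₁^# → G₂^#`, `ψ^#(e(α)) := e(ψ(α))` (junk value `1` if the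
canonical extension of `ψ` does not map `k((G₁^{>1}))` into `k((G₂^{>1}))`). -/
def psiSharp {k : Type*} [Field k] [LinearOrder k] [IsStrictOrderedRing k] {G₁ G₂ : Type*} [CommGroup G₁] [LinearOrder G₁] [IsOrderedMonoid G₁]
    [CommGroup G₂] [LinearOrder G₂] [IsOrderedMonoid G₂] (ψ : G₁ → G₂) (x : Gsharp k G₁) : Gsharp k G₂ :=
  if h : ∀ f ∈ largeSeries k G₁, extMap ψ f ∈ largeSeries k G₂ then
    Multiplicative.ofAdd
      (⟨extMap ψ ((Multiplicative.toAdd x : ↥(largeSeries k G₁)) : HahnSeries (gdual G₁) k),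
        h _ (Multiplicative.toAdd x).2⟩ : ↥(largeSeries k G₂))
  else 1

/-- Condition (†) for subgroups `U ⊆ H` of `G`:
`l(H) < |f|` for every nonzero `f ∈ k((H^{>U}))`. -/
def CondDagger (l : G → HahnSeries (gdual G) k) (U H : Subgroup G) : Prop :=
  ∀ h ∈ H, ∀ f : HahnSeries (gdual G) k, f ≠ 0 →
    (∀ γ ∈ f.support, toG γ ∈ H ∧ ∀ u ∈ U, u < toG γ) → l h < |f|

/-- The growth axiom for a subgroup `H` of `G`:
`l(H) < |f|` for every nonzero `f ∈ k((H^{>1}))`. -/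
def GrowthAxiom (l : G → HahnSeries (gdual G) k) (H : Subgroup G) : Prop :=
  CondDagger l (⊥ : Subgroup G) H

theorem mem_large_of_gt {f : HahnSeries (gdual G) k} {U H : Subgroup G}
    (hf : ∀ γ ∈ f.support, toG γ ∈ H ∧ ∀ u ∈ U, u < toG γ) : f ∈ largeSeries k G :=
  fun γ hγ => show (1 : G) < toG γ from (hf γ hγ).2 1 U.one_mem

/-- The set `H^{#,U} = ι(H)·e[k((H^{>U}))] ⊆ G^#`. -/
def sharpProdSet (l : G → HahnSeries (gdual G) k) (hl : ∀ g, l g ∈ largeSeries k G)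
    (U H : Subgroup G) : Set (Gsharp k G) :=
  {x | ∃ h ∈ H, ∃ f : HahnSeries (gdual G) k,
    ∃ hf : ∀ γ ∈ f.support, toG γ ∈ H ∧ ∀ u ∈ U, u < toG γ,
    x = iotaSharp l hl h *
      Multiplicative.ofAdd (⟨f, mem_large_of_gt hf⟩ : ↥(largeSeries k G))}

end Series

section Hahn

variable (k : Type*) [Field k] [LinearOrder k] [IsStrictOrderedRing k] {Γ : Type*} [LinearOrder Γ]

/-- The Hahn group `Γ^k` of formal products `∏_γ x_γ^(g γ)` with anti well-ordered support,
ordered anti-lexicographically, realized as the multiplicative copy of the additive group of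
Hahn series over `Γᵒᵈ` with coefficients in `k`. -/
abbrev HahnGroup (Γ : Type*) [LinearOrder Γ] (k : Type*) [Field k] [LinearOrder k] [IsStrictOrderedRing k] : Type _ :=
  Multiplicative (HahnSeries Γᵒᵈ k)

/-- The monomial `x_γ` in the Hahn group `Γ^k`. -/
def xMon (γ : Γ) : HahnGroup Γ k :=
  Multiplicative.ofAdd (HahnSeries.single (OrderDual.toDual γ) (1 : k))

/-- The prelogarithmic section `l_σ` on `k((Γ^k))` induced by `σ : Γ → Γ`:
`l_σ(∏_γ x_γ^(g γ)) := Σ_γ (g γ)·x_(σ γ)` (junk value `0` if `σ` is not strictly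
order-preserving). -/
def sigmaSection (σ : Γ → Γ) :
    HahnGroup Γ k → HahnSeries (gdual (HahnGroup Γ k)) k :=
  if hσ : StrictMono σ then fun g =>
    HahnSeries.embDomain
      (OrderEmbedding.ofStrictMono
        (fun γ : Γᵒᵈ => toGd (xMon k (σ (OrderDual.ofDual γ))))
        (fun a b hab =>
          show toGd (xMon k (σ (OrderDual.ofDual a))) < toGd (xMon k (σ (OrderDual.ofDual b)))
          from hahn_single_lt_single
            (show OrderDual.toDual (σ (OrderDual.ofDual a)) <
                OrderDual.toDual (σ (OrderDual.ofDual b)) from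
              hσ (show OrderDual.ofDual b < OrderDual.ofDual a from hab))))
      (Multiplicative.toAdd g)
  else fun _ => 0

/-- The lift `ψ_σ : Γ^k → Γ^k` of `σ : Γ → Γ`, `ψ_σ(∏_γ x_γ^(g γ)) := ∏_γ x_(σ γ)^(g γ)`
(junk value `id` if `σ` is not strictly order-preserving). -/
def sigmaAuto (σ : Γ → Γ) : HahnGroup Γ k → HahnGroup Γ k :=
  if hσ : StrictMono σ then fun g =>
    Multiplicative.ofAdd
      (HahnSeries.embDomain
        (OrderEmbedding.ofStrictMono
          (fun γ : Γᵒᵈ => OrderDual.toDual (σ (OrderDual.ofDual γ)))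
          (fun a b hab =>
            show OrderDual.toDual (σ (OrderDual.ofDual a)) <
                OrderDual.toDual (σ (OrderDual.ofDual b)) from
              hσ (show OrderDual.ofDual b < OrderDual.ofDual a from hab)))
        (Multiplicative.toAdd g))
  else id

end Hahn

/-! `ψ^#` is the canonical extension of `ψ` restricted to `k((G₁^{>1}))`, so it is additive and
strictly increasing, and `ψ^# ∘ ι₁ = ι₂ ∘ ψ` is the morphism property of `ψ` read through `e`.
Since canonical extensions compose (`extMap φ ∘ extMap ψ = extMap (φ ∘ ψ)`), this square gives
`extMap ψ^# ∘ extMap ι₁ = extMap ι₂ ∘ extMap ψ`, i.e. `extMap ψ^# ∘ l₁^# = l₂^# ∘ ψ^#`. -/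

section PsiSharp

variable {k : Type*} [Field k] [LinearOrder k] [IsStrictOrderedRing k]

theorem hahn_lt_iff_toLex_lt {Γ' : Type*} [LinearOrder Γ'] (x y : HahnSeries Γ' k) :
    x < y ↔ toLex x < toLex y :=
  (leadingCoeff_pos_iff (x := toLex y - toLex x)).trans sub_pos

theorem embDomain_strictMono {Γ' Γ'' : Type*} [LinearOrder Γ'] [LinearOrder Γ'']
    (e : Γ' ↪o Γ'') : StrictMono (embDomain e : HahnSeries Γ' k → HahnSeries Γ'' k) :=
  fun x y hxy => by
    rw [hahn_lt_iff_toLex_lt] at hxy ⊢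
    exact (embDomainOrderEmbedding e).lt_iff_lt.2 hxy

theorem embDomain_embDomain {R Γ Γ' Γ'' : Type*} [Zero R] [PartialOrder Γ] [PartialOrder Γ']
    [PartialOrder Γ''] (f : Γ ↪o Γ') (g : Γ' ↪o Γ'') (x : HahnSeries Γ R) :
    embDomain g (embDomain f x) = embDomain (f.trans g) x := by
  ext c
  by_cases hc : c ∈ Set.range (f.trans g)
  · obtain ⟨a, rfl⟩ := hc
    rw [RelEmbedding.trans_apply, embDomain_coeff, embDomain_coeff,
      ← RelEmbedding.trans_apply, embDomain_coeff]
  rw [embDomain_of_notMem_range hc]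
  by_cases hc' : c ∈ Set.range g
  · obtain ⟨b, rfl⟩ := hc'
    rw [embDomain_coeff]
    exact embDomain_of_notMem_range fun ⟨a, ha⟩ => hc ⟨a, by simp [ha]⟩
  · exact embDomain_of_notMem_range hc'

variable {G₁ G₂ G₃ : Type*} [CommGroup G₁] [LinearOrder G₁] [IsOrderedMonoid G₁]
  [CommGroup G₂] [LinearOrder G₂] [IsOrderedMonoid G₂]
  [CommGroup G₃] [LinearOrder G₃] [IsOrderedMonoid G₃]

def gdualEmbedding {ψ : G₁ → G₂} (hψ : StrictMono ψ) : gdual G₁ ↪o gdual G₂ :=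
  OrderEmbedding.ofStrictMono (fun γ => toGd (ψ (toG γ)))
    (fun a b hab => show toGd (ψ (toG a)) < toGd (ψ (toG b)) from
      hψ (show toG b < toG a from hab))

theorem extMap_eq_embDomain {ψ : G₁ → G₂} (hψ : StrictMono ψ) :
    extMap (k := k) ψ = embDomain (gdualEmbedding hψ) :=
  dif_pos hψ

theorem extMap_add {ψ : G₁ → G₂} (hψ : StrictMono ψ) (x y : HahnSeries (gdual G₁) k) :
    extMap ψ (x + y) = extMap ψ x + extMap ψ y := by
  rw [extMap_eq_embDomain hψ]
  exact embDomain_add _ x y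

theorem extMap_strictMono {ψ : G₁ → G₂} (hψ : StrictMono ψ) :
    StrictMono (extMap (k := k) ψ) := by
  rw [extMap_eq_embDomain hψ]
  exact embDomain_strictMono _

theorem extMap_extMap {ψ : G₁ → G₂} {φ : G₂ → G₃} (hψ : StrictMono ψ) (hφ : StrictMono φ)
    (f : HahnSeries (gdual G₁) k) :
    extMap φ (extMap ψ f) = extMap (φ ∘ ψ) f := by
  rw [extMap_eq_embDomain hψ, extMap_eq_embDomain hφ, extMap_eq_embDomain (hφ.comp hψ),
    embDomain_embDomain]
  rfl

theorem extMap_mem_largeSeries {ψ : G₁ → G₂} (hψ : StrictMono ψ) (hψ1 : ψ 1 = 1)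
    {f : HahnSeries (gdual G₁) k} (hf : f ∈ largeSeries k G₁) :
    extMap ψ f ∈ largeSeries k G₂ := by
  rw [extMap_eq_embDomain hψ]
  intro γ hγ
  obtain ⟨δ, hδ, rfl⟩ := support_embDomain_subset hγ
  show 1 < ψ (toG δ)
  exact hψ1 ▸ hψ (hf δ hδ)

theorem iotaSharp_strictMono {G : Type*} [CommGroup G] [LinearOrder G] [IsOrderedMonoid G]
    {l : G → HahnSeries (gdual G) k} (hl : IsPrelogSection l) :
    StrictMono (iotaSharp l hl.supp_large) :=
  fun _ _ hab => Subtype.mk_lt_mk.2 (hl.strictMono hab)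

theorem coe_toAdd_psiSharp {ψ : G₁ → G₂} (hψ : StrictMono ψ) (hψ1 : ψ 1 = 1)
    (x : Gsharp k G₁) :
    ((Multiplicative.toAdd (psiSharp ψ x) : ↥(largeSeries k G₂)) : HahnSeries (gdual G₂) k) =
      extMap ψ ((Multiplicative.toAdd x : ↥(largeSeries k G₁)) : HahnSeries (gdual G₁) k) := by
  rw [psiSharp, dif_pos fun f hf => extMap_mem_largeSeries hψ hψ1 hf]
  rfl

theorem psiSharp_eq_iff {ψ : G₁ → G₂} (hψ : StrictMono ψ) (hψ1 : ψ 1 = 1)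
    {x : Gsharp k G₁} {y : Gsharp k G₂} :
    psiSharp ψ x = y ↔ extMap ψ ((Multiplicative.toAdd x : ↥(largeSeries k G₁)) :
      HahnSeries (gdual G₁) k) = ((Multiplicative.toAdd y : ↥(largeSeries k G₂)) :
        HahnSeries (gdual G₂) k) := by
  rw [← coe_toAdd_psiSharp hψ hψ1, Subtype.coe_inj, EmbeddingLike.apply_eq_iff_eq]

theorem psiSharp_mul {ψ : G₁ → G₂} (hψ : StrictMono ψ) (hψ1 : ψ 1 = 1) (x y : Gsharp k G₁) :
    psiSharp ψ (x * y) = psiSharp ψ x * psiSharp ψ y := by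
  rw [psiSharp_eq_iff hψ hψ1, toAdd_mul, toAdd_mul, AddSubgroup.coe_add,
    AddSubgroup.coe_add, coe_toAdd_psiSharp hψ hψ1, coe_toAdd_psiSharp hψ hψ1]
  exact extMap_add hψ _ _

theorem psiSharp_strictMono {ψ : G₁ → G₂} (hψ : StrictMono ψ) (hψ1 : ψ 1 = 1) :
    StrictMono (psiSharp (k := k) ψ) := fun x y hxy => by
  show ((Multiplicative.toAdd (psiSharp ψ x) : ↥(largeSeries k G₂)) : HahnSeries (gdual G₂) k) <
    ((Multiplicative.toAdd (psiSharp ψ y) : ↥(largeSeries k G₂)) : HahnSeries (gdual G₂) k)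
  rw [coe_toAdd_psiSharp hψ hψ1, coe_toAdd_psiSharp hψ hψ1]
  exact extMap_strictMono hψ hxy

theorem psiSharp_iotaSharp {ψ : G₁ → G₂} (hψ : StrictMono ψ) (hψ1 : ψ 1 = 1)
    {l₁ : G₁ → HahnSeries (gdual G₁) k} (hl₁ : ∀ g, l₁ g ∈ largeSeries k G₁)
    {l₂ : G₂ → HahnSeries (gdual G₂) k} (hl₂ : ∀ g, l₂ g ∈ largeSeries k G₂)
    (hcomm : ∀ g, extMap ψ (l₁ g) = l₂ (ψ g)) (g : G₁) :
    psiSharp ψ (iotaSharp l₁ hl₁ g) = iotaSharp l₂ hl₂ (ψ g) :=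
  (psiSharp_eq_iff hψ hψ1).2 (hcomm g)

theorem extMap_psiSharp_lsharpFun {ψ : G₁ → G₂} (hψ : StrictMono ψ) (hψ1 : ψ 1 = 1)
    {l₁ : G₁ → HahnSeries (gdual G₁) k} (hl₁ : IsPrelogSection l₁)
    {l₂ : G₂ → HahnSeries (gdual G₂) k} (hl₂ : IsPrelogSection l₂)
    (hcomm : ∀ g, extMap ψ (l₁ g) = l₂ (ψ g)) (x : Gsharp k G₁) :
    extMap (psiSharp ψ) (lsharpFun l₁ hl₁.supp_large x) =
      lsharpFun l₂ hl₂.supp_large (psiSharp ψ x) := by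
  have hsquare : psiSharp ψ ∘ iotaSharp l₁ hl₁.supp_large = iotaSharp l₂ hl₂.supp_large ∘ ψ :=
    funext (psiSharp_iotaSharp hψ hψ1 hl₁.supp_large hl₂.supp_large hcomm)
  rw [lsharpFun, lsharpFun, extMap_extMap (iotaSharp_strictMono hl₁) (psiSharp_strictMono hψ hψ1),
    hsquare, ← extMap_extMap hψ (iotaSharp_strictMono hl₂), coe_toAdd_psiSharp hψ hψ1]

end PsiSharp

/-- Let `ψ` be a morphism from `(k((G₁)),l₁)` to `(k((G₂)),l₂)` and let
`G₁^#, G₂^#` be the exponential extension groups with embeddings `ι₁, ι₂` and sections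
`l₁^#, l₂^#`.  The map `ψ^# : G₁^# → G₂^#`, `ψ^#(e(α)) := e(ψ(α))` (= `psiSharp ψ`), is an
order-preserving group embedding which extends `ψ` (`ψ^# ∘ ι₁ = ι₂ ∘ ψ`), and `ψ^#` is a
morphism from `(k((G₁^#)),l₁^#)` to `(k((G₂^#)),l₂^#)`: the canonical extension of `ψ^#`
satisfies `(extMap ψ^#) ∘ l₁^# = l₂^# ∘ ψ^#` on `G₁^#`. -/
theorem psiSharp_is_morphism {k : Type*} [Field k] [LinearOrder k] [IsStrictOrderedRing k]
    {G₁ G₂ : Type*} [CommGroup G₁] [LinearOrder G₁] [IsOrderedMonoid G₁] [CommGroup G₂] [LinearOrder G₂] [IsOrderedMonoid G₂]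
    (l₁ : G₁ → HahnSeries (gdual G₁) k) (hl₁ : IsPrelogSection l₁)
    (l₂ : G₂ → HahnSeries (gdual G₂) k) (hl₂ : IsPrelogSection l₂)
    (ψ : G₁ →* G₂) (hψ : StrictMono ψ)
    (hcomm : ∀ g : G₁, extMap (k := k) (⇑ψ) (l₁ g) = l₂ (ψ g)) :
    (∀ x y : Gsharp k G₁, psiSharp (⇑ψ) (x * y) = psiSharp (⇑ψ) x * psiSharp (⇑ψ) y) ∧
    StrictMono (psiSharp (k := k) (⇑ψ)) ∧
    (∀ g : G₁, psiSharp (⇑ψ) (iotaSharp l₁ hl₁.supp_large g) =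
      iotaSharp l₂ hl₂.supp_large (ψ g)) ∧
    (∀ x : Gsharp k G₁,
      extMap (psiSharp (⇑ψ)) (lsharpFun l₁ hl₁.supp_large x) =
        lsharpFun l₂ hl₂.supp_large (psiSharp (⇑ψ) x)) :=
  ⟨psiSharp_mul hψ (map_one ψ), psiSharp_strictMono hψ (map_one ψ),
    psiSharp_iotaSharp hψ (map_one ψ) hl₁.supp_large hl₂.supp_large hcomm,
    extMap_psiSharp_lsharpFun hψ (map_one ψ) hl₁ hl₂ hcomm⟩

end
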